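/- Let T be a rooted ordered tree with n nodes and let s(T) be the binary string obtained by listing node labels in pre-order. For a TED trace T' of T, the string s(T') equals the subsequence of s(T) obtained by deleting the positions of deleted nodes. Consequently, the distribution of s(T') is exactly that of passing s(T) through the i.i.d. bit-deletion channel with deletion probability q. -/
import Mathlib


open scoped Classical

/-- Rooted ordered trees whose nodes carry identities/labels of type `α`. -/
inductive LTree (α : Type) : Type
  | node (label : α) (children : List (LTree α)) : LTree α

namespace LTree

mutual
  /-- Pre-order traversal of a tree: root first, then children left to right. -/
  def preorder {α : Type} : LTree α → List α
    | .node a cs => a :: preorderList cs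
  /-- Pre-order traversal of a forest, left to right. -/
  def preorderList {α : Type} : List (LTree α) → List α
    | [] => []
    | t :: ts => preorder t ++ preorderList ts
end

/-- The TED deletion channel applied to a forest with deletion pattern `ω`
(`ω a = true` means the node with identity `a` is deleted): a deleted node's children
replace it, in order, under its parent. -/
def tedDeleteList {α : Type} (ω : α → Bool) : List (LTree α) → List (LTree α)
  | [] => []
  | .node a cs :: rest =>
    if ω a then tedDeleteList ω cs ++ tedDeleteList ω rest
    else .node a (tedDeleteList ω cs) :: tedDeleteList ω rest

end LTree


theorem LTree.pl_append {α : Type} : ∀ a b : List (LTree α),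
    LTree.preorderList (a ++ b) = LTree.preorderList a ++ LTree.preorderList b := by
  intro a b
  induction a with
  | nil => rfl
  | cons t ts ih => simp [LTree.preorderList, ih]

theorem LTree.key {α : Type} (ω : α → Bool) : ∀ f : List (LTree α),
    LTree.preorderList (LTree.tedDeleteList ω f)
      = (LTree.preorderList f).filter (fun x => !ω x) := by
  intro f
  induction f using LTree.tedDeleteList.induct (ω := ω) with
  | case1 => simp [LTree.tedDeleteList, LTree.preorderList]
  | case2 a cs rest h ih1 ih2 =>
    simp [LTree.tedDeleteList, LTree.preorderList, LTree.preorder, h, ih1, ih2, LTree.pl_append]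
  | case3 a cs rest h ih1 ih2 =>
    simp [LTree.tedDeleteList, LTree.preorderList, LTree.preorder, h, ih1, ih2]

/-- For a rooted ordered tree (here, forest) `f` whose nodes carry
distinct identities, the pre-order string of the TED trace determined by a deletion
pattern `ω` equals the subsequence of the pre-order string of `f` obtained by deleting
the positions of deleted nodes.  Consequently, for nodes deleted independently with
probability `q`, the distribution of the pre-order string of a TED trace is exactly
that of passing the pre-order string of `f` through the i.i.d. deletion channel with
deletion probability `q`. -/
theorem stmt_14 {α : Type} [Fintype α] (f : List (LTree α))
    (hnodup : (LTree.preorderList f).Nodup) :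
    (∀ ω : α → Bool,
      LTree.preorderList (LTree.tedDeleteList ω f)
        = (LTree.preorderList f).filter (fun x => !ω x)) ∧
    ∀ (q : ℝ) (r : List α),
      (∑ ω : α → Bool,
        if LTree.preorderList (LTree.tedDeleteList ω f) = r then
          ∏ v : α, (if ω v then q else 1 - q) else 0)
      = ∑ ω : α → Bool,
          if (LTree.preorderList f).filter (fun x => !ω x) = r then
            ∏ v : α, (if ω v then q else 1 - q) else 0 := by
  refine ⟨fun ω => LTree.key ω f , fun q r => ?_⟩
  simp only [LTree.key]
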